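/- Let α, C > 0, let f : (0,1]² → ℝ be mixed α-Hölder with constant C with respect to the dyadic metrics, and let A : ℝ → ℝ be twice continuously differentiable with A'' Lipschitz on the closed interval [inf f, sup f]. Then there exists a constant C' > 0, depending only on C, the sup of |A''| on [inf f, sup f], and the Lipschitz constant of A'' on [inf f, sup f], such that for all x, y, x', y' ∈ (0,1]: | [A(f(y,y')) − A(f(x,y')) − A(f(y,x')) + A(f(x,x'))] − A'(f(x,x'))·[f(y,y') − f(x,y') − f(y,x') + f(x,x')] − A''(f(x,x'))·[f(y,x') − f(x,x')]·[f(x,y') − f(x,x')] | ≤ C' ( d(x,y)^{2α} d(x',y')^{α} + d(x,y)^{α} d(x',y')^{2α} ). -/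

import Mathlib

/-!
Write `a = f(x,x')`, `b = f(y,x')`, `c = f(x,y')`, `d = f(y,y')`, `w = d - c - b + a`, and let
`Φ(s,t) = a + s (b - a) + t (c - a) + s t w` interpolate these values bilinearly on the unit square.
Two applications of the mean value theorem to `A ∘ Φ` show that `A d - A c - A b + A a` is the
mixed partial `∂ₛ∂ₜ (A ∘ Φ)` at an interior point `(ξ, η)`. The point `p = Φ(ξ, η)` is a convex
combination of `a, b, c, d`, so it stays in `[inf f, sup f]`, where `|A''| ≤ B` and `A''` is
`K`-Lipschitz; comparing `A'(p)` and `A''(p)` with `A'(a)` and `A''(a)` leaves a remainder at most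
`|p - a| (K |b - a| |c - a| + 2 B |w|)`. The Hölder bounds `|b - a| ≤ C d^α`, `|c - a| ≤ C d'^α`,
`|w| ≤ C d^α d'^α` together with `d, d' ≤ 1` then give the estimate.
-/

open MeasureTheory Set Filter

/-- The index `k` of the scale-`j` dyadic interval `(2^{-j} k, 2^{-j}(k+1)]` containing `x`. -/
noncomputable def dyadicIndex (j : ℕ) (x : ℝ) : ℤ := ⌈(2:ℝ) ^ j * x⌉ - 1

/-- The scale-`j` dyadic interval `I^j_k = (2^{-j} k, 2^{-j}(k+1)]`. -/
noncomputable def dyadicInterval (j : ℕ) (k : ℤ) : Set ℝ :=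
  Set.Ioc ((2:ℝ) ^ (-(j:ℤ)) * k) ((2:ℝ) ^ (-(j:ℤ)) * (k + 1))

/-- The dyadic averaging operator `P^j`:  `(P^j f)(x) = 2^j ∫_{I^j_k} f`, where `I^j_k` is the
scale-`j` dyadic interval containing `x`. -/
noncomputable def dyadicAvg (j : ℕ) (f : ℝ → ℝ) (x : ℝ) : ℝ :=
  (2:ℝ) ^ j * ∫ t in dyadicInterval j (dyadicIndex j x), f t

/-- The dyadic metric on `(0,1]`:
`d(x,y) = inf { 2^{-j} : x and y lie in the same scale-j dyadic interval }` for `x ≠ y`,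
and `d(x,x) = 0`. -/
noncomputable def dyadicDist (x y : ℝ) : ℝ :=
  if x = y then 0
  else sInf {r : ℝ | ∃ j : ℕ, r = (2:ℝ) ^ (-(j:ℤ)) ∧ dyadicIndex j x = dyadicIndex j y}

/-- `f` is `α`-Hölder with constant `C` on `(0,1]` with respect to the dyadic metric. -/
def HolderDyadic (α C : ℝ) (f : ℝ → ℝ) : Prop :=
  ∀ x ∈ Set.Ioc (0:ℝ) 1, ∀ y ∈ Set.Ioc (0:ℝ) 1, |f x - f y| ≤ C * dyadicDist x y ^ α

/-- `g` is mixed `α`-Hölder with constant `C` on `(0,1]²` with respect to the dyadic metrics. -/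
def MixedHolderDyadic (α C : ℝ) (g : ℝ → ℝ → ℝ) : Prop :=
  ∀ x ∈ Set.Ioc (0:ℝ) 1, ∀ y ∈ Set.Ioc (0:ℝ) 1, ∀ x' ∈ Set.Ioc (0:ℝ) 1, ∀ y' ∈ Set.Ioc (0:ℝ) 1,
    |g y x' - g x x'| ≤ C * dyadicDist x y ^ α ∧
    |g x y' - g x x'| ≤ C * dyadicDist x' y' ^ α ∧
    |g y y' - g x y' - g y x' + g x x'| ≤ C * (dyadicDist x y ^ α * dyadicDist x' y' ^ α)

/-- Dyadic averaging at scale `j` in the first variable. -/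
noncomputable def avgFst (j : ℕ) (g : ℝ → ℝ → ℝ) (x x' : ℝ) : ℝ := dyadicAvg j (fun t => g t x') x

/-- Dyadic averaging at scale `j'` in the second variable. -/
noncomputable def avgSnd (j' : ℕ) (g : ℝ → ℝ → ℝ) (x x' : ℝ) : ℝ := dyadicAvg j' (fun t => g x t) x'

/-- The double averaging operator `P^j P'^{j'}`. -/
noncomputable def avg2 (j j' : ℕ) (g : ℝ → ℝ → ℝ) : ℝ → ℝ → ℝ := avgFst j (avgSnd j' g)

/-- The mixed martingale difference `Δ_j Δ'_{j'} g`. -/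
noncomputable def mixedDiff (j j' : ℕ) (g : ℝ → ℝ → ℝ) (x x' : ℝ) : ℝ :=
  avg2 (j+1) (j'+1) g x x' - avg2 j (j'+1) g x x' - avg2 (j+1) j' g x x' + avg2 j j' g x x'

/-- `Δ_j P'^{j'} g`: martingale difference in the first variable, average in the second. -/
noncomputable def diffFstAvgSnd (j j' : ℕ) (g : ℝ → ℝ → ℝ) (x x' : ℝ) : ℝ :=
  avg2 (j+1) j' g x x' - avg2 j j' g x x'

/-- `P^j Δ'_{j'} g`: average in the first variable, martingale difference in the second. -/
noncomputable def avgFstDiffSnd (j j' : ℕ) (g : ℝ → ℝ → ℝ) (x x' : ℝ) : ℝ :=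
  avg2 j (j'+1) g x x' - avg2 j j' g x x'

/-- The (unnormalized) Haar function `ψ^j_k`: `+1` on the right half of `I^j_k`, `-1` on its
left half, `0` elsewhere. -/
noncomputable def haarFn (j : ℕ) (k : ℤ) (x : ℝ) : ℝ :=
  if x ∈ Set.Ioc ((2:ℝ) ^ (-(j:ℤ)) * k + (2:ℝ) ^ (-(j:ℤ) - 1)) ((2:ℝ) ^ (-(j:ℤ)) * (k + 1)) then 1
  else if x ∈ Set.Ioc ((2:ℝ) ^ (-(j:ℤ)) * k) ((2:ℝ) ^ (-(j:ℤ)) * k + (2:ℝ) ^ (-(j:ℤ) - 1)) then -1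
  else 0

lemma dyadicDist_nonneg (x y : ℝ) : 0 ≤ dyadicDist x y := by
  unfold dyadicDist
  split
  · exact le_rfl
  · exact Real.sInf_nonneg (by rintro r ⟨j, rfl, -⟩; positivity)

lemma dyadicIndex_zero {x : ℝ} (hx : x ∈ Ioc (0 : ℝ) 1) : dyadicIndex 0 x = 0 := by
  have h : ⌈x⌉ = 1 := Int.ceil_eq_iff.2 ⟨by simpa using hx.1, by simpa using hx.2⟩
  simp [dyadicIndex, h]

lemma dyadicDist_le_one {x y : ℝ} (hx : x ∈ Ioc (0 : ℝ) 1) (hy : y ∈ Ioc (0 : ℝ) 1) :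
    dyadicDist x y ≤ 1 := by
  unfold dyadicDist
  split
  · exact zero_le_one
  · refine csInf_le ⟨0, by rintro r ⟨j, rfl, -⟩; positivity⟩ ⟨0, by norm_num, ?_⟩
    rw [dyadicIndex_zero hx, dyadicIndex_zero hy]

lemma dyadicDist_rpow_mem_Icc {α x y : ℝ} (hα : 0 ≤ α) (hx : x ∈ Ioc (0 : ℝ) 1)
    (hy : y ∈ Ioc (0 : ℝ) 1) : dyadicDist x y ^ α ∈ Icc (0 : ℝ) 1 :=
  ⟨Real.rpow_nonneg (dyadicDist_nonneg x y) α,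
    Real.rpow_le_one (dyadicDist_nonneg x y) (dyadicDist_le_one hx hy) hα⟩

namespace MixedHolderDyadic

variable {α C : ℝ} {f : ℝ → ℝ → ℝ}

lemma abs_sub_le_two_mul (hf : MixedHolderDyadic α C f) (hα : 0 ≤ α) (hC : 0 ≤ C) {x y x' y' : ℝ}
    (hx : x ∈ Ioc (0 : ℝ) 1) (hy : y ∈ Ioc (0 : ℝ) 1) (hx' : x' ∈ Ioc (0 : ℝ) 1)
    (hy' : y' ∈ Ioc (0 : ℝ) 1) : |f y y' - f x x'| ≤ 2 * C := by
  have h₁ := (hf x hx y hy y' hy' y' hy').1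
  have h₂ := (hf x hx x hx x' hx' y' hy').2.1
  calc |f y y' - f x x'| ≤ |f y y' - f x y'| + |f x y' - f x x'| := abs_sub_le _ _ _
    _ ≤ C * 1 + C * 1 := by
      gcongr
      · exact h₁.trans (by gcongr; exact (dyadicDist_rpow_mem_Icc hα hx hy).2)
      · exact h₂.trans (by gcongr; exact (dyadicDist_rpow_mem_Icc hα hx' hy').2)
    _ = 2 * C := by ring

lemma mem_Icc_sInf_sSup (hf : MixedHolderDyadic α C f) (hα : 0 ≤ α) (hC : 0 ≤ C) {x x' : ℝ}
    (hx : x ∈ Ioc (0 : ℝ) 1) (hx' : x' ∈ Ioc (0 : ℝ) 1) :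
    f x x' ∈ Icc (sInf (image2 f (Ioc 0 1) (Ioc 0 1))) (sSup (image2 f (Ioc 0 1) (Ioc 0 1))) := by
  have h₁ : (1 : ℝ) ∈ Ioc (0 : ℝ) 1 := right_mem_Ioc.2 zero_lt_one
  have hsub : image2 f (Ioc 0 1) (Ioc 0 1) ⊆ Icc (f 1 1 - 2 * C) (f 1 1 + 2 * C) := by
    rintro _ ⟨z, hz, z', hz', rfl⟩
    have := abs_sub_le_iff.1 (hf.abs_sub_le_two_mul hα hC h₁ hz h₁ hz')
    constructor <;> linarith
  have hmem : f x x' ∈ image2 f (Ioc 0 1) (Ioc 0 1) := mem_image2_of_mem hx hx'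
  exact ⟨csInf_le (bddBelow_Icc.mono hsub) hmem, le_csSup (bddAbove_Icc.mono hsub) hmem⟩

end MixedHolderDyadic

lemma exists_mixed_difference_eq {A : ℝ → ℝ} (hA : ContDiff ℝ 2 A) (a u v w : ℝ) :
    ∃ ξ ∈ Ioo (0 : ℝ) 1, ∃ η ∈ Ioo (0 : ℝ) 1,
      A (a + u + v + w) - A (a + v) - A (a + u) + A a =
        deriv (deriv A) (a + ξ * u + η * (v + ξ * w)) * (v + ξ * w) * (u + η * w)
          + deriv A (a + ξ * u + η * (v + ξ * w)) * w := by
  have hA₁ : Differentiable ℝ A := hA.differentiable two_ne_zero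
  have hA₂ : Differentiable ℝ (deriv A) := hA.differentiable_deriv_two
  have hΦs (t s : ℝ) : HasDerivAt (fun s => a + s * u + t * (v + s * w)) (u + t * w) s := by
    have hΦ : (fun s => a + s * u + t * (v + s * w)) = fun s => a + t * v + s * (u + t * w) := by
      ext s; ring
    exact hΦ ▸ (hasDerivAt_mul_const _).const_add _
  have hΦt (s t : ℝ) : HasDerivAt (fun t => a + s * u + t * (v + s * w)) (v + s * w) t :=
    (hasDerivAt_mul_const _).const_add _
  have hg (s : ℝ) :=
    ((hA₁ _).hasDerivAt.comp s (hΦs 1 s)).sub ((hA₁ _).hasDerivAt.comp s (hΦs 0 s))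
  obtain ⟨ξ, hξ, hξ_eq⟩ := exists_hasDerivAt_eq_slope _ _ zero_lt_one
    (fun s _ => (hg s).continuousAt.continuousWithinAt) (fun s _ => hg s)
  have hh (t : ℝ) :=
    ((hA₂ _).hasDerivAt.comp t (hΦt ξ t)).mul ((hasDerivAt_mul_const w).const_add u)
  obtain ⟨η, hη, hη_eq⟩ := exists_hasDerivAt_eq_slope _ _ zero_lt_one
    (fun t _ => (hh t).continuousAt.continuousWithinAt) (fun t _ => hh t)
  refine ⟨ξ, hξ, η, hη, ?_⟩
  simp only [Function.comp_apply, Pi.sub_apply, Pi.mul_apply, sub_zero, div_one, one_mul,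
    zero_mul, add_zero] at hξ_eq hη_eq
  rw [hη_eq, hξ_eq, add_assoc (a + u)]
  ring

lemma bilinear_mem_of_convex {s : Set ℝ} (hs : Convex ℝ s) {a u v w ξ η : ℝ} (ha : a ∈ s)
    (hb : a + u ∈ s) (hc : a + v ∈ s) (hd : a + u + v + w ∈ s) (hξ : ξ ∈ Icc (0 : ℝ) 1)
    (hη : η ∈ Icc (0 : ℝ) 1) : a + ξ * u + η * (v + ξ * w) ∈ s := by
  have h₀ : a + ξ * u ∈ s := by
    simpa using hs.add_smul_sub_mem ha hb hξ
  have h₁ : a + v + ξ * (u + w) ∈ s := by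
    convert hs.add_smul_sub_mem hc hd hξ using 2; rw [smul_eq_mul]; ring
  convert hs.add_smul_sub_mem h₀ h₁ hη using 1; rw [smul_eq_mul]; ring

lemma abs_bilinear_le {u v w ξ η : ℝ} (hξ : ξ ∈ Icc (0 : ℝ) 1) (hη : η ∈ Icc (0 : ℝ) 1) :
    |ξ * u + η * (v + ξ * w)| ≤ |u| + |v| + |w| := by
  have hcontract {t : ℝ} (ht : t ∈ Icc (0 : ℝ) 1) (z : ℝ) : |t * z| ≤ |z| := by
    rw [abs_mul, abs_of_nonneg ht.1]
    exact mul_le_of_le_one_left (abs_nonneg z) ht.2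
  linarith [abs_add_le (ξ * u) (η * (v + ξ * w)), hcontract hη (v + ξ * w),
    abs_add_le v (ξ * w), hcontract hξ u, hcontract hξ w]

/-- `a, b, c, d` stand for `g(x,x'), g(y,x'), g(x,y'), g(y,y')`. -/
noncomputable def mixedTaylorRemainder (A : ℝ → ℝ) (a b c d : ℝ) : ℝ :=
  (A d - A c - A b + A a) - deriv A a * (d - c - b + a) - deriv (deriv A) a * (b - a) * (c - a)

theorem abs_mixedTaylorRemainder_le {A : ℝ → ℝ} (hA : ContDiff ℝ 2 A) {s : Set ℝ}
    (hs : Convex ℝ s) {B : ℝ} {K : NNReal} (hB : ∀ z ∈ s, |deriv (deriv A) z| ≤ B)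
    (hK : LipschitzOnWith K (deriv (deriv A)) s) {a b c d : ℝ} (ha : a ∈ s) (hb : b ∈ s)
    (hc : c ∈ s) (hd : d ∈ s) :
    |mixedTaylorRemainder A a b c d| ≤ (|b - a| + |c - a| + |d - c - b + a|)
      * (K * (|b - a| * |c - a|) + 2 * B * |d - c - b + a|) := by
  obtain ⟨u, rfl⟩ : ∃ u, b = a + u := ⟨b - a, by ring⟩
  obtain ⟨v, rfl⟩ : ∃ v, c = a + v := ⟨c - a, by ring⟩
  obtain ⟨w, rfl⟩ : ∃ w, d = a + u + v + w := ⟨d - (a + v) - (a + u) + a, by ring⟩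
  have hw : a + u + v + w - (a + v) - (a + u) + a = w := by ring
  simp only [mixedTaylorRemainder, add_sub_cancel_left, hw]
  obtain ⟨ξ, hξ, η, hη, hmvt⟩ := exists_mixed_difference_eq hA a u v w
  set p := a + ξ * u + η * (v + ξ * w) with hp_def
  have hp : p ∈ s := bilinear_mem_of_convex hs ha hb hc hd (Ioo_subset_Icc_self hξ)
    (Ioo_subset_Icc_self hη)
  have hpa : |p - a| ≤ |u| + |v| + |w| := by
    rw [hp_def, add_assoc, add_sub_cancel_left]
    exact abs_bilinear_le (Ioo_subset_Icc_self hξ) (Ioo_subset_Icc_self hη)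
  have hB₀ : 0 ≤ B := (abs_nonneg _).trans (hB a ha)
  have h₁ : |deriv A p - deriv A a| ≤ B * |p - a| := by
    simpa only [Real.norm_eq_abs] using hs.norm_image_sub_le_of_norm_deriv_le
      (fun z _ => hA.differentiable_deriv_two z) (fun z hz => by simpa using hB z hz) ha hp
  have h₂ : |deriv (deriv A) p - deriv (deriv A) a| ≤ K * |p - a| := by
    simpa only [Real.dist_eq] using hK.dist_le_mul p hp a ha
  have hsplit : A (a + u + v + w) - A (a + v) - A (a + u) + A a - deriv A a * w
      - deriv (deriv A) a * u * v = (deriv A p - deriv A a) * w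
        + (deriv (deriv A) p - deriv (deriv A) a) * (u * v)
        + deriv (deriv A) p * ((p - a) * w) := by
    rw [hmvt, hp_def]; ring
  rw [hsplit]
  calc _ ≤ |deriv A p - deriv A a| * |w| + |deriv (deriv A) p - deriv (deriv A) a| * (|u| * |v|)
        + |deriv (deriv A) p| * (|p - a| * |w|) :=
        (abs_add_three _ _ _).trans_eq (by simp only [abs_mul])
    _ ≤ B * |p - a| * |w| + K * |p - a| * (|u| * |v|) + B * (|p - a| * |w|) := by
        gcongr
        exact hB p hp
    _ = |p - a| * (K * (|u| * |v|) + 2 * B * |w|) := by ring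
    _ ≤ (|u| + |v| + |w|) * (K * (|u| * |v|) + 2 * B * |w|) := by gcongr

lemma mul_le_of_mixed_holder_bounds {u v w B K C D₁ D₂ : ℝ} (hB : 0 ≤ B) (hK : 0 ≤ K) (hC : 0 ≤ C)
    (hD₁ : D₁ ∈ Icc (0 : ℝ) 1) (hD₂ : D₂ ∈ Icc (0 : ℝ) 1) (hu : |u| ≤ C * D₁)
    (hv : |v| ≤ C * D₂) (hw : |w| ≤ C * (D₁ * D₂)) :
    (|u| + |v| + |w|) * (K * (|u| * |v|) + 2 * B * |w|)
      ≤ 2 * C * (K * C ^ 2 + 2 * B * C) * (D₁ ^ 2 * D₂ + D₁ * D₂ ^ 2) := by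
  obtain ⟨hD₁₀, hD₁₁⟩ := hD₁
  obtain ⟨hD₂₀, hD₂₁⟩ := hD₂
  have hr : |u| + |v| + |w| ≤ C * (D₁ + D₂ + D₁ * D₂) := by linarith
  have hq : K * (|u| * |v|) + 2 * B * |w| ≤ (K * C ^ 2 + 2 * B * C) * (D₁ * D₂) :=
    calc K * (|u| * |v|) + 2 * B * |w| ≤ K * ((C * D₁) * (C * D₂)) + 2 * B * (C * (D₁ * D₂)) := by
          gcongr
      _ = (K * C ^ 2 + 2 * B * C) * (D₁ * D₂) := by ring
  -- `D₁² D₂² ≤ D₁² D₂` because `D₂ ≤ 1`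
  have hD : (D₁ + D₂ + D₁ * D₂) * (D₁ * D₂) ≤ 2 * (D₁ ^ 2 * D₂ + D₁ * D₂ ^ 2) := by
    nlinarith [mul_nonneg (mul_nonneg (sq_nonneg D₁) hD₂₀) (sub_nonneg.2 hD₂₁),
      mul_nonneg hD₁₀ (sq_nonneg D₂)]
  calc _ ≤ C * (D₁ + D₂ + D₁ * D₂) * ((K * C ^ 2 + 2 * B * C) * (D₁ * D₂)) :=
        mul_le_mul hr hq (by positivity) (by positivity)
    _ = C * (K * C ^ 2 + 2 * B * C) * ((D₁ + D₂ + D₁ * D₂) * (D₁ * D₂)) := by ring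
    _ ≤ C * (K * C ^ 2 + 2 * B * C) * (2 * (D₁ ^ 2 * D₂ + D₁ * D₂ ^ 2)) := by gcongr
    _ = _ := by ring

/-- Second-order mixed Taylor estimate: if `f` is mixed `α`-Hölder with
constant `C` and `A` is `C²` with `A''` Lipschitz on `[inf f, sup f]`, then there is `C' > 0`
such that the second-order mixed Taylor remainder of `A ∘ f` is bounded by
`C' (d(x,y)^{2α} d(x',y')^{α} + d(x,y)^{α} d(x',y')^{2α})`. -/
theorem second_order_mixed_taylor
    (α C : ℝ) (hα : 0 < α) (hC : 0 < C)
    (f : ℝ → ℝ → ℝ) (hf : MixedHolderDyadic α C f)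
    (A : ℝ → ℝ) (hA : ContDiff ℝ 2 A)
    (K : NNReal)
    (hlip : LipschitzOnWith K (deriv (deriv A))
      (Set.Icc (sInf (Set.image2 f (Set.Ioc 0 1) (Set.Ioc 0 1)))
        (sSup (Set.image2 f (Set.Ioc 0 1) (Set.Ioc 0 1))))) :
    ∃ C' > 0, ∀ x ∈ Set.Ioc (0:ℝ) 1, ∀ y ∈ Set.Ioc (0:ℝ) 1,
      ∀ x' ∈ Set.Ioc (0:ℝ) 1, ∀ y' ∈ Set.Ioc (0:ℝ) 1,
      |(A (f y y') - A (f x y') - A (f y x') + A (f x x'))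
          - deriv A (f x x') * (f y y' - f x y' - f y x' + f x x')
          - deriv (deriv A) (f x x') * (f y x' - f x x') * (f x y' - f x x')|
        ≤ C' * (dyadicDist x y ^ (2 * α) * dyadicDist x' y' ^ α
            + dyadicDist x y ^ α * dyadicDist x' y' ^ (2 * α)) := by
  obtain ⟨B, hB₀, hB⟩ : ∃ B > 0, ∀ z ∈ Icc (sInf (image2 f (Ioc 0 1) (Ioc 0 1)))
      (sSup (image2 f (Ioc 0 1) (Ioc 0 1))), |deriv (deriv A) z| ≤ B := by
    obtain ⟨B, hB⟩ := isCompact_Icc.exists_bound_of_continuousOn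
      (hA.deriv' (n := 1)).continuous_deriv_one.continuousOn
    exact ⟨max B 1, by positivity, fun z hz => (hB z hz).trans (le_max_left _ _)⟩
  refine ⟨2 * C * (K * C ^ 2 + 2 * B * C), by positivity, fun x hx y hy x' hx' y' hy' => ?_⟩
  have hmem {z z' : ℝ} (hz : z ∈ Ioc (0 : ℝ) 1) (hz' : z' ∈ Ioc (0 : ℝ) 1) :=
    hf.mem_Icc_sInf_sSup hα.le hC.le hz hz'
  obtain ⟨hu, hv, hw⟩ := hf x hx y hy x' hx' y' hy'
  rw [mul_comm 2 α, Real.rpow_mul (dyadicDist_nonneg x y), Real.rpow_mul (dyadicDist_nonneg x' y'),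
    Real.rpow_two, Real.rpow_two]
  exact (abs_mixedTaylorRemainder_le hA (convex_Icc _ _) hB hlip (hmem hx hx') (hmem hy hx')
    (hmem hx hy') (hmem hy hy')).trans (mul_le_of_mixed_holder_bounds hB₀.le K.2 hC.le
      (dyadicDist_rpow_mem_Icc hα.le hx hy) (dyadicDist_rpow_mem_Icc hα.le hx' hy') hu hv hw)
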